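/- For every POMDP G with absorbing target set T, the belief-support-based strategy σ_Allow is almost-sure winning for the reachability objective Reach(T) from every belief-support U ∈ BeliefWin(G,T), i.e., when the initial distribution is uniform on U, playing σ_Allow reaches T with probability 1. -/

import Mathlib

open Finset Filter
open scoped Classical

set_option linter.unusedSectionVars false

noncomputable section

/-- A finite history of a play: the current state together with the
(reversed) list of past steps; an entry `(a, s')` means: the action `a`
was taken from the state `s'` (leading to the next recorded state). -/
abbrev Hist (S A : Type) := S × List (A × S)

/-- The observation–action sequence of a history. -/
def obsHist {S A Z : Type} (O : S → Z) (h : Hist S A) : Z × List (A × Z) :=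
  (O h.1, h.2.map fun p => (p.1, O p.2))

/-- An observation-based (randomized, history-dependent) strategy. -/
structure Strategy (S A Z : Type) [Fintype A] (O : S → Z) where
  act : Hist S A → A → ℝ
  act_nonneg : ∀ h a, 0 ≤ act h a
  act_sum : ∀ h, ∑ a, act h a = 1
  obsBased : ∀ h h', obsHist O h = obsHist O h' → act h = act h'

/-- A partially observable Markov decision process. -/
structure POMDP (S A Z : Type) [Fintype S] [Fintype A] [Fintype Z] where
  δ : S → A → S → ℝ
  δ_nonneg : ∀ s a s', 0 ≤ δ s a s'
  δ_sum : ∀ s a, ∑ s', δ s a s' = 1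
  obs : S → Z
  init : S → ℝ
  init_nonneg : ∀ s, 0 ≤ init s
  init_sum : ∑ s, init s = 1
  init_obs : ∀ s s', 0 < init s → 0 < init s' → obs s = obs s'

namespace POMDP

variable {S A Z : Type} [Fintype S] [Fintype A] [Fintype Z]

/-- The target set `T` consists of absorbing states. -/
def Absorbing (M : POMDP S A Z) (T : Set S) : Prop :=
  ∀ t ∈ T, ∀ a, M.δ t a t = 1

/-- Probability that after `n` steps the process has followed exactly the
history `(s, l)` (so `l` has length `n`). -/
def hprobAux (M : POMDP S A Z) (σ : Strategy S A Z M.obs) : ℕ → S → List (A × S) → ℝ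
  | 0, s, l => if l = [] then M.init s else 0
  | n+1, s, l =>
    match l with
    | [] => 0
    | (a, s') :: rest => hprobAux M σ n s' rest * σ.act (s', rest) a * M.δ s' a s

def hprob (M : POMDP S A Z) (σ : Strategy S A Z M.obs) (n : ℕ) (h : Hist S A) : ℝ :=
  M.hprobAux σ n h.1 h.2

/-- The state sequence of a history visits the set `T`. -/
def visitsT (T : Set S) (h : Hist S A) : Prop :=
  h.1 ∈ T ∨ ∃ p ∈ h.2, p.2 ∈ T

/-- Probability of reaching `T` within the first `n` steps. -/
def probReachBy (M : POMDP S A Z) (T : Set S) (σ : Strategy S A Z M.obs) (n : ℕ) : ℝ :=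
  ∑' h : Hist S A, if visitsT T h then M.hprob σ n h else 0

/-- Probability of the reachability objective `Reach(T)`. -/
def probReach (M : POMDP S A Z) (T : Set S) (σ : Strategy S A Z M.obs) : ℝ :=
  ⨆ n, M.probReachBy T σ n

/-- The strategy `σ` is almost-sure winning for `Reach(T)`. -/
def AlmostSure (M : POMDP S A Z) (T : Set S) (σ : Strategy S A Z M.obs) : Prop :=
  M.probReach T σ = 1

/-- Accumulated cost along a history. -/
def totalCostAux (c : S → A → ℝ) : S → List (A × S) → ℝ
  | _, [] => 0
  | _, (a, s') :: rest => totalCostAux c s' rest + c s' a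

def totalCostH (c : S → A → ℝ) (h : Hist S A) : ℝ := totalCostAux c h.1 h.2

/-- Expected total cost of the first `n` steps, i.e. `E[Total_{n-1}]`
(in particular `E[Total_k] = expTotalSteps M c σ (k+1)`). -/
def expTotalSteps (M : POMDP S A Z) (c : S → A → ℝ) (σ : Strategy S A Z M.obs) (n : ℕ) : ℝ :=
  ∑' h : Hist S A, M.hprob σ n h * totalCostH c h

/-- The value `Val(σ) = E[Total]` of a strategy, as the limit (limsup) of the
expected costs of the finite prefixes. -/
def Val (M : POMDP S A Z) (c : S → A → ℝ) (σ : Strategy S A Z M.obs) : EReal :=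
  Filter.limsup (fun n => ((M.expTotalSteps c σ n : ℝ) : EReal)) Filter.atTop

/-- `optCost`: the infimum of the values of almost-sure winning strategies. -/
def optCost (M : POMDP S A Z) (T : Set S) (c : S → A → ℝ) : EReal :=
  ⨅ σ : {σ : Strategy S A Z M.obs // M.AlmostSure T σ}, M.Val c σ.1

end POMDP

namespace POMDP

variable {S A Z : Type} [Fintype S] [Fintype A] [Fintype Z]

/-- Uniform distribution over a finite set of states. -/
def uniformS (U : Finset S) : S → ℝ := fun s => if s ∈ U then ((U.card : ℝ))⁻¹ else 0

lemma uniformS_nonneg (U : Finset S) (s : S) : 0 ≤ uniformS U s := by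
  unfold uniformS; split_ifs <;> positivity

lemma uniformS_sum (U : Finset S) (h : U.Nonempty) : ∑ s, uniformS U s = 1 := by
  unfold uniformS
  rw [Finset.sum_ite_mem, Finset.univ_inter, Finset.sum_const, nsmul_eq_mul,
    mul_inv_cancel₀]
  exact_mod_cast Finset.card_ne_zero.mpr h

lemma uniformS_mem {U : Finset S} {s : S} (h : 0 < uniformS U s) : s ∈ U := by
  by_contra hc; simp [uniformS, hc] at h

/-- The POMDP `M` with the initial distribution replaced by the uniform
distribution over `U`. -/
def reinit (M : POMDP S A Z) (U : Finset S) (hU : U.Nonempty)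
    (hobs : ∀ s ∈ U, ∀ s' ∈ U, M.obs s = M.obs s') : POMDP S A Z :=
  { M with
    init := uniformS U
    init_nonneg := uniformS_nonneg U
    init_sum := uniformS_sum U hU
    init_obs := fun s s' hs hs' => hobs s (uniformS_mem hs) s' (uniformS_mem hs') }

/-- The POMDP `M` with the initial distribution replaced by the Dirac
distribution at `s0`. -/
def resetDirac (M : POMDP S A Z) (s0 : S) : POMDP S A Z :=
  { M with
    init := fun s => if s = s0 then 1 else 0
    init_nonneg := by intro s; split_ifs <;> norm_num
    init_sum := by simp
    init_obs := by
      intro s s' hs hs'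
      have h1 : s = s0 := by by_contra hc; simp [hc] at hs
      have h2 : s' = s0 := by by_contra hc; simp [hc] at hs'
      rw [h1, h2] }

/-- The set of almost-sure winning belief-supports: those `U` from which
(with the uniform initial distribution on `U`) some strategy wins
`Reach(T)` almost-surely. -/
def BeliefWin (M : POMDP S A Z) (T : Set S) : Set (Finset S) :=
  {U | ∃ (hU : U.Nonempty) (hobs : ∀ s ∈ U, ∀ s' ∈ U, M.obs s = M.obs s'),
      ∃ σ : Strategy S A Z M.obs, (M.reinit U hU hobs).AlmostSure T σ}

/-- Belief-support update. -/
def updateF (M : POMDP S A Z) (U : Finset S) (z : Z) (a : A) : Finset S :=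
  univ.filter (fun t => M.obs t = z ∧ ∃ s ∈ U, 0 < M.δ s a t)

/-- Allowed actions at a belief-support `U`. -/
def AllowSet (M : POMDP S A Z) (T : Set S) (U : Finset S) : Set A :=
  {a | ∀ z, (M.updateF U z a).Nonempty → M.updateF U z a ∈ M.BeliefWin T}

def allowFin (M : POMDP S A Z) (T : Set S) (U : Finset S) : Finset A :=
  univ.filter (· ∈ M.AllowSet T U)

/-- The support of the initial distribution, as a belief-support. -/
def suppInitF (M : POMDP S A Z) : Finset S := univ.filter (fun s => 0 < M.init s)

/-- Belief-support after a history, starting from the initial belief-support `U0`. -/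
def beliefOfFromAux (M : POMDP S A Z) (U0 : Finset S) : S → List (A × S) → Finset S
  | s, [] => U0.filter (fun t => M.obs t = M.obs s)
  | s, (a, s') :: rest => M.updateF (M.beliefOfFromAux U0 s' rest) (M.obs s) a

def beliefOfFrom (M : POMDP S A Z) (U0 : Finset S) (h : Hist S A) : Finset S :=
  M.beliefOfFromAux U0 h.1 h.2

/-- Belief-support after a history (with the initial belief-support being
the support of the initial distribution). -/
def beliefOf (M : POMDP S A Z) (h : Hist S A) : Finset S :=
  M.beliefOfFrom M.suppInitF h

lemma beliefOfFromAux_obs (M : POMDP S A Z) (U0 : Finset S) :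
    ∀ (l l' : List (A × S)) (s s' : S),
      l.map (fun p => (p.1, M.obs p.2)) = l'.map (fun p => (p.1, M.obs p.2)) →
      M.obs s = M.obs s' →
      M.beliefOfFromAux U0 s l = M.beliefOfFromAux U0 s' l'
  | [], [], s, s', _, hs => by simp [beliefOfFromAux, hs]
  | [], (_ :: _), _, _, hmap, _ => by simp at hmap
  | (_ :: _), [], _, _, hmap, _ => by simp at hmap
  | ((a, t) :: r), ((a', t') :: r'), s, s', hmap, hs => by
      simp only [List.map_cons, List.cons.injEq, Prod.mk.injEq] at hmap
      obtain ⟨⟨ha, ht⟩, hr⟩ := hmap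
      simp only [beliefOfFromAux]
      rw [M.beliefOfFromAux_obs U0 r r' t t' hr ht, hs, ha]

/-- Uniform distribution over a finite set of actions. -/
def uniformA (F : Finset A) : A → ℝ := fun a => if a ∈ F then ((F.card : ℝ))⁻¹ else 0

lemma uniformA_nonneg (F : Finset A) (a : A) : 0 ≤ uniformA F a := by
  unfold uniformA; split_ifs <;> positivity

lemma uniformA_sum (F : Finset A) (h : F.Nonempty) : ∑ a, uniformA F a = 1 := by
  unfold uniformA
  rw [Finset.sum_ite_mem, Finset.univ_inter, Finset.sum_const, nsmul_eq_mul,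
    mul_inv_cancel₀]
  exact_mod_cast Finset.card_ne_zero.mpr h

/-- The action distribution of `σ_Allow` (with initial belief-support `U0`):
uniform over the allowed actions of the current belief-support (with a
uniform fallback where no action is allowed). -/
def actAllowFrom (M : POMDP S A Z) (T : Set S) (U0 : Finset S) (h : Hist S A) : A → ℝ :=
  if (M.allowFin T (M.beliefOfFrom U0 h)).Nonempty
  then uniformA (M.allowFin T (M.beliefOfFrom U0 h))
  else uniformA (univ : Finset A)

/-- The belief-support based strategy `σ_Allow` (tracking beliefs from `U0`). -/
def stratAllowFrom [Nonempty A] (M : POMDP S A Z) (T : Set S) (U0 : Finset S) :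
    Strategy S A Z M.obs where
  act := M.actAllowFrom T U0
  act_nonneg := by
    intro h a; unfold actAllowFrom; split_ifs <;> exact uniformA_nonneg _ _
  act_sum := by
    intro h; unfold actAllowFrom; split_ifs with hne
    · exact uniformA_sum _ hne
    · exact uniformA_sum _ univ_nonempty
  obsBased := by
    intro h h' hobs
    have : M.beliefOfFrom U0 h = M.beliefOfFrom U0 h' := by
      unfold beliefOfFrom
      exact M.beliefOfFromAux_obs U0 h.2 h'.2 h.1 h'.1
        (congrArg Prod.snd hobs) (congrArg Prod.fst hobs)
    unfold actAllowFrom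
    rw [this]

/-- `σ_Allow`. -/
def stratAllow [Nonempty A] (M : POMDP S A Z) (T : Set S) : Strategy S A Z M.obs :=
  M.stratAllowFrom T M.suppInitF

/-- `T_Allow(s, U)`: the expected total cost of `σ_Allow` started in the
state `s` with the initial belief-support `U`. -/
def TAllow [Nonempty A] (M : POMDP S A Z) (T : Set S) (c : S → A → ℝ) (s : S) (U : Finset S) :
    EReal :=
  (M.resetDirac s).Val c (M.stratAllowFrom T U)

/-- `U_Allow`: the maximal expected total cost of `σ_Allow` over all
almost-sure winning belief-supports `U` and states `s ∈ U`. -/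
def UAllow [Nonempty A] (M : POMDP S A Z) (T : Set S) (c : S → A → ℝ) : EReal :=
  ⨆ U ∈ M.BeliefWin T, ⨆ s ∈ U, M.TAllow T c s U

end POMDP

namespace POMDP

variable {S A Z : Type} [Fintype S] [Fintype A] [Fintype Z]

/-- Normalization of a nonnegative function into a distribution. -/
def normalize (f : S → ℝ) : S → ℝ := fun t => f t / ∑ u, f u

/-- Support of an information state. -/
def suppF (b : S → ℝ) : Finset S := univ.filter (fun s => b s ≠ 0)

/-- The information state (posterior distribution) after a history. -/
def infoOfAux (M : POMDP S A Z) : S → List (A × S) → S → ℝ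
  | s, [] => normalize (fun t => if M.obs t = M.obs s then M.init t else 0)
  | s, (a, s') :: rest =>
      normalize (fun t => if M.obs t = M.obs s then ∑ u, M.infoOfAux s' rest u * M.δ u a t else 0)

def infoOf (M : POMDP S A Z) (h : Hist S A) : S → ℝ := M.infoOfAux h.1 h.2

lemma infoOfAux_obs (M : POMDP S A Z) :
    ∀ (l l' : List (A × S)) (s s' : S),
      l.map (fun p => (p.1, M.obs p.2)) = l'.map (fun p => (p.1, M.obs p.2)) →
      M.obs s = M.obs s' →
      M.infoOfAux s l = M.infoOfAux s' l'
  | [], [], s, s', _, hs => by simp [infoOfAux, hs]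
  | [], (_ :: _), _, _, hmap, _ => by simp at hmap
  | (_ :: _), [], _, _, hmap, _ => by simp at hmap
  | ((a, t) :: r), ((a', t') :: r'), s, s', hmap, hs => by
      simp only [List.map_cons, List.cons.injEq, Prod.mk.injEq] at hmap
      obtain ⟨⟨ha, ht⟩, hr⟩ := hmap
      simp only [infoOfAux]
      rw [M.infoOfAux_obs r r' t t' hr ht, hs, ha]

/-- Expected one-step cost `c'(b,a)` at an information state. -/
def cinfo (c : S → A → ℝ) (b : S → ℝ) (a : A) : ℝ := ∑ s, b s * c s a

/-- Probability of observing `z` after playing `a` at information state `b`. -/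
def obsProb (M : POMDP S A Z) (b : S → ℝ) (a : A) (z : Z) : ℝ :=
  ∑ t, if M.obs t = z then ∑ u, b u * M.δ u a t else 0

/-- Bayesian update of the information state `b` under action `a` and
observation `z`. -/
def postInfo (M : POMDP S A Z) (b : S → ℝ) (a : A) (z : Z) : S → ℝ :=
  normalize (fun t => if M.obs t = z then ∑ u, b u * M.δ u a t else 0)

/-- The allowed-action-restricted finite-horizon value iteration `V*_n`. -/
def Vstar (M : POMDP S A Z) (T : Set S) (c : S → A → ℝ) : ℕ → (S → ℝ) → ℝ
  | 0, _ => 0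
  | n+1, b =>
    if h : (M.allowFin T (suppF b)).Nonempty then
      (M.allowFin T (suppF b)).inf' h
        (fun a => cinfo c b a + ∑ z, M.obsProb b a z * M.Vstar T c n (M.postInfo b a z))
    else 0

/-- An allowed action attaining the minimum of the value iteration with
`n` steps remaining at information state `b`. -/
def foAct [Nonempty A] (M : POMDP S A Z) (T : Set S) (c : S → A → ℝ) : ℕ → (S → ℝ) → A
  | 0, _ => Classical.arbitrary A
  | n+1, b =>
    if h : (M.allowFin T (suppF b)).Nonempty then
      Classical.choose (Finset.exists_mem_eq_inf' h
        (fun a => cinfo c b a + ∑ z, M.obsProb b a z * M.Vstar T c n (M.postInfo b a z)))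
    else Classical.arbitrary A

/-- The action distribution of the finite-horizon optimal strategy `σFO_k`. -/
def actFO [Nonempty A] (M : POMDP S A Z) (T : Set S) (c : S → A → ℝ) (k : ℕ) (h : Hist S A) :
    A → ℝ :=
  fun a => if a = M.foAct T c (k - h.2.length) (M.infoOf h) then 1 else 0

lemma length_eq_of_obsHist {h h' : Hist S A} {O : S → Z} (he : obsHist O h = obsHist O h') :
    h.2.length = h'.2.length := by
  have := congrArg (fun x => (Prod.snd x).length) he
  simpa [obsHist] using this

/-- The (allowed-action-restricted) finite-horizon optimal strategy `σFO_k`. -/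
def stratFO [Nonempty A] (M : POMDP S A Z) (T : Set S) (c : S → A → ℝ) (k : ℕ) :
    Strategy S A Z M.obs where
  act := M.actFO T c k
  act_nonneg := by intro h a; unfold actFO; split_ifs <;> norm_num
  act_sum := by intro h; unfold actFO; simp
  obsBased := by
    intro h h' hobs
    have hlen : h.2.length = h'.2.length := length_eq_of_obsHist hobs
    have hinfo : M.infoOf h = M.infoOf h' := by
      unfold infoOf
      exact M.infoOfAux_obs h.2 h'.2 h.1 h'.1
        (congrArg Prod.snd hobs) (congrArg Prod.fst hobs)
    unfold actFO
    rw [hlen, hinfo]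

/-- The strategy `σ*_k`: play `σFO_k` for the first `k` steps, then `σ_Allow`. -/
def stratStar [Nonempty A] (M : POMDP S A Z) (T : Set S) (c : S → A → ℝ) (k : ℕ) :
    Strategy S A Z M.obs where
  act := fun h =>
    if h.2.length < k then M.actFO T c k h else M.actAllowFrom T M.suppInitF h
  act_nonneg := by
    intro h a; split_ifs with hl
    · exact (M.stratFO T c k).act_nonneg h a
    · exact (M.stratAllowFrom T M.suppInitF).act_nonneg h a
  act_sum := by
    intro h; split_ifs with hl
    · exact (M.stratFO T c k).act_sum h
    · exact (M.stratAllowFrom T M.suppInitF).act_sum h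
  obsBased := by
    intro h h' hobs
    have hlen : h.2.length = h'.2.length := length_eq_of_obsHist hobs
    rw [hlen]
    split_ifs with hl
    · exact (M.stratFO T c k).obsBased h h' hobs
    · exact (M.stratAllowFrom T M.suppInitF).obsBased h h' hobs

/-- `α_k`: the probability that `T` is not reached within the first `k`
steps when playing `σ*_k`. -/
def alphaK [Nonempty A] (M : POMDP S A Z) (T : Set S) (c : S → A → ℝ) (k : ℕ) : ℝ :=
  1 - M.probReachBy T (M.stratStar T c k) k

end POMDP

/-!
Along every positive-probability history of `σ_Allow`, the tracked belief-support contains the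
current state and is almost-sure winning: conditioning an almost-sure winning strategy on a
history shows that every action it plays with positive probability is allowed, so `σ_Allow`
never leaves the winning belief-supports. From a pair `(s, B)` with `s ∈ B` winning, `T` is
reachable along allowed actions (otherwise a winning strategy started in `s` would never reach
`T`), and, as there are finitely many such pairs, within a uniform number `N` of steps. Each of
these steps is taken by `σ_Allow` with probability at least `p_min / |A|`, where `p_min` is the
least positive transition probability, so every `N` steps the probability of not having reached
`T` yet shrinks by the factor `1 - (p_min / |A|) ^ N`.
-/

open scoped Topology

lemma tendsto_zero_of_antitone_of_le_mul {f : ℕ → ℝ} (hf : Antitone f)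
    (hf0 : ∀ n, 0 ≤ f n) {q : ℝ} (hq0 : 0 ≤ q) (hq1 : q < 1) {N : ℕ}
    (hN : ∀ n, f (n + N) ≤ q * f n) :
    Tendsto f atTop (𝓝 0) := by
  have hpow : ∀ k, f (k * N) ≤ q ^ k * f 0 := by
    intro k
    induction k with
    | zero => simp
    | succ k ih =>
      calc f ((k + 1) * N) = f (k * N + N) := by rw [add_mul, one_mul]
        _ ≤ q * f (k * N) := hN _
        _ ≤ q * (q ^ k * f 0) := mul_le_mul_of_nonneg_left ih hq0
        _ = q ^ (k + 1) * f 0 := by ring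
  have hbdd : BddBelow (Set.range f) := ⟨0, Set.forall_mem_range.2 hf0⟩
  have hgeom : Tendsto (fun k => q ^ k * f 0) atTop (𝓝 0) := by
    simpa using (tendsto_pow_atTop_nhds_zero_of_lt_one hq0 hq1).mul_const (f 0)
  have hinf : ⨅ n, f n = 0 :=
    le_antisymm (ge_of_tendsto' hgeom fun k => (ciInf_le hbdd (k * N)).trans (hpow k))
      (le_ciInf hf0)
  simpa [hinf] using tendsto_atTop_ciInf hf hbdd

namespace Strategy

variable {S A Z : Type} [Fintype A] {O : S → Z}

def after (σ : Strategy S A Z O) (tail : List (A × S)) :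
    Strategy S A Z O where
  act g := σ.act (g.1, g.2 ++ tail)
  act_nonneg g := σ.act_nonneg _
  act_sum g := σ.act_sum _
  obsBased g g' he := σ.obsBased _ _ <| by simp_all [obsHist]

lemma exists_inv_card_le [Nonempty A] (σ : Strategy S A Z O) (h : Hist S A) :
    ∃ a, (Fintype.card A : ℝ)⁻¹ ≤ σ.act h a := by
  obtain ⟨a, -, ha⟩ := exists_le_of_sum_le univ_nonempty
    (f := fun _ => (Fintype.card A : ℝ)⁻¹) (g := σ.act h) (by simp [σ.act_sum h])
  exact ⟨a, ha⟩

end Strategy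

namespace POMDP

variable {S A Z : Type}

section Histories

/-- `m` lists the new steps latest first, like the past of a `Hist`. -/
def extendHist (h : Hist S A) : List (A × S) → Hist S A
  | [] => h
  | p :: m => (p.2, (p.1, (extendHist h m).1) :: (extendHist h m).2)

lemma extendHist_append (h : Hist S A) (m₁ m₂ : List (A × S)) :
    extendHist h (m₁ ++ m₂) = extendHist (extendHist h m₂) m₁ := by
  induction m₁ with
  | nil => rfl
  | cons p m₁ ih => simp only [List.cons_append, extendHist, ih]

lemma visitsT_extendHist {T : Set S} (h : Hist S A) (m : List (A × S)) :
    visitsT T (extendHist h m) ↔ visitsT T h ∨ ∃ p ∈ m, p.2 ∈ T := by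
  induction m with
  | nil => simp [extendHist]
  | cons p m ih =>
    simp only [visitsT, extendHist, List.mem_cons, exists_eq_or_imp] at ih ⊢
    rw [ih]
    exact or_left_comm

lemma extendHist_append_past (h : Hist S A) (tail m : List (A × S)) :
    extendHist (h.1, h.2 ++ tail) m = ((extendHist h m).1, (extendHist h m).2 ++ tail) := by
  induction m with
  | nil => rfl
  | cons p m ih => simp [extendHist, ih]

def pathProb (δ : S → A → S → ℝ) (π : Hist S A → A → ℝ) (h : Hist S A) :
    List (A × S) → ℝ
  | [] => 1
  | p :: m => pathProb δ π h m * π (extendHist h m) p.1 * δ (extendHist h m).1 p.1 p.2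

lemma pathProb_append (δ : S → A → S → ℝ) (π : Hist S A → A → ℝ) (h : Hist S A)
    (m₁ m₂ : List (A × S)) :
    pathProb δ π h (m₁ ++ m₂)
      = pathProb δ π h m₂ * pathProb δ π (extendHist h m₂) m₁ := by
  induction m₁ with
  | nil => simp [pathProb]
  | cons p m₁ ih =>
    simp only [List.cons_append, pathProb, ih, extendHist_append]
    ring

lemma pathProb_after {O : S → Z} [Fintype A] (δ : S → A → S → ℝ) (σ : Strategy S A Z O)
    (h : Hist S A) (tail m : List (A × S)) :
    pathProb δ (σ.after tail).act h m = pathProb δ σ.act (h.1, h.2 ++ tail) m := by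
  induction m with
  | nil => rfl
  | cons p m ih => simp only [pathProb, ih, extendHist_append_past]; rfl

variable (S A) [Fintype S] [Fintype A]

def stepsOfLength : ℕ → Finset (List (A × S))
  | 0 => {[]}
  | n + 1 => (stepsOfLength n ×ˢ univ).image fun x => x.2 :: x.1

def histsOfLength : ℕ → Finset (Hist S A)
  | 0 => univ.image fun s => (s, [])
  | n + 1 => (histsOfLength n ×ˢ univ).image fun x => extendHist x.1 [x.2]

variable {S A}

lemma mem_stepsOfLength {n : ℕ} {m : List (A × S)} :
    m ∈ stepsOfLength S A n ↔ m.length = n := by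
  induction n generalizing m with
  | zero => simp [stepsOfLength]
  | succ n ih => cases m <;> simp [stepsOfLength, ih]

lemma mem_histsOfLength {n : ℕ} {h : Hist S A} :
    h ∈ histsOfLength S A n ↔ h.2.length = n := by
  obtain ⟨s, l⟩ := h
  induction n generalizing s l with
  | zero => simp [histsOfLength, eq_comm]
  | succ n ih =>
    cases l with
    | nil => simp [histsOfLength, extendHist]
    | cons p l =>
      simp only [histsOfLength, mem_image, mem_product, mem_univ, and_true, Prod.exists, extendHist]
      constructor
      · rintro ⟨s', l', a, t, hl, he⟩
        simp only [Prod.mk.injEq, List.cons.injEq] at he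
        obtain ⟨rfl, ⟨rfl, rfl⟩, rfl⟩ := he
        simpa using (ih _ _).1 hl
      · intro hl
        exact ⟨p.2, l, p.1, s, (ih _ _).2 (by simpa using hl), rfl⟩

lemma sum_stepsOfLength_succ {β : Type*} [AddCommMonoid β] (n : ℕ) (F : List (A × S) → β) :
    ∑ m ∈ stepsOfLength S A (n + 1), F m
      = ∑ m ∈ stepsOfLength S A n, ∑ p, F (p :: m) := by
  rw [stepsOfLength, sum_image fun x _ y _ h => by
    obtain ⟨h₁, h₂⟩ := List.cons.inj h; exact Prod.ext h₂ h₁, sum_product]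

lemma sum_histsOfLength_zero {β : Type*} [AddCommMonoid β] (F : Hist S A → β) :
    ∑ h ∈ histsOfLength S A 0, F h = ∑ s, F (s, []) := by
  rw [histsOfLength, sum_image fun s _ s' _ h => congrArg Prod.fst h]

lemma sum_histsOfLength_succ {β : Type*} [AddCommMonoid β] (n : ℕ) (F : Hist S A → β) :
    ∑ h ∈ histsOfLength S A (n + 1), F h
      = ∑ h ∈ histsOfLength S A n, ∑ p, F (extendHist h [p]) := by
  rw [histsOfLength, sum_image, sum_product]
  rintro ⟨⟨s, l⟩, a, t⟩ - ⟨⟨s', l'⟩, a', t'⟩ - h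
  simp only [extendHist, Prod.mk.injEq, List.cons.injEq] at h
  obtain ⟨rfl, ⟨rfl, rfl⟩, rfl⟩ := h
  rfl

lemma sum_histsOfLength_add {β : Type*} [AddCommMonoid β] (n k : ℕ) (F : Hist S A → β) :
    ∑ h ∈ histsOfLength S A (n + k), F h
      = ∑ h ∈ histsOfLength S A n, ∑ m ∈ stepsOfLength S A k, F (extendHist h m) := by
  induction k generalizing F with
  | zero => simp [stepsOfLength, extendHist]
  | succ k ih =>
    simp only [← add_assoc, sum_histsOfLength_succ, ih, sum_stepsOfLength_succ]
    rfl

end Histories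

variable [Fintype S] [Fintype A] [Fintype Z] (M : POMDP S A Z) (σ : Strategy S A Z M.obs)
  (T : Set S)

section Probability

lemma pathProb_nonneg (h : Hist S A) (m : List (A × S)) : 0 ≤ pathProb M.δ σ.act h m := by
  induction m with
  | nil => exact zero_le_one
  | cons p m ih => exact mul_nonneg (mul_nonneg ih (σ.act_nonneg _ _)) (M.δ_nonneg _ _ _)

lemma sum_pathProb (h : Hist S A) (k : ℕ) :
    ∑ m ∈ stepsOfLength S A k, pathProb M.δ σ.act h m = 1 := by
  induction k with
  | zero => simp [stepsOfLength, pathProb]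
  | succ k ih =>
    rw [sum_stepsOfLength_succ, ← ih]
    refine sum_congr rfl fun m _ => ?_
    simp only [pathProb, Fintype.sum_prod_type, mul_assoc, ← mul_sum, M.δ_sum, mul_one,
      σ.act_sum]

lemma hprob_nonneg (n : ℕ) (h : Hist S A) : 0 ≤ M.hprob σ n h := by
  obtain ⟨s, l⟩ := h
  induction n generalizing s l with
  | zero => unfold hprob hprobAux; split_ifs <;> simp [M.init_nonneg]
  | succ n ih =>
    rcases l with _ | ⟨⟨a, s'⟩, l⟩
    · exact le_rfl
    · exact mul_nonneg (mul_nonneg (ih s' l) (σ.act_nonneg _ _)) (M.δ_nonneg _ _ _)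

lemma hprob_zero (s : S) : M.hprob σ 0 (s, []) = M.init s := rfl

lemma hprob_succ (n : ℕ) (x y : S) (a : A) (l : List (A × S)) :
    M.hprob σ (n + 1) (x, (a, y) :: l) = M.hprob σ n (y, l) * σ.act (y, l) a * M.δ y a x := rfl

lemma length_eq_of_hprob_ne_zero {n : ℕ} {h : Hist S A} (hh : M.hprob σ n h ≠ 0) :
    h.2.length = n := by
  obtain ⟨s, l⟩ := h
  induction n generalizing s l with
  | zero => by_contra hl; simp_all [hprob, hprobAux]
  | succ n ih =>
    rcases l with _ | ⟨⟨a, y⟩, l⟩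
    · exact absurd rfl hh
    · rw [hprob_succ] at hh
      simpa using ih y l (left_ne_zero_of_mul (left_ne_zero_of_mul hh))

lemma pos_of_hprob_succ_pos {n : ℕ} {x y : S} {a : A} {l : List (A × S)}
    (hpos : 0 < M.hprob σ (n + 1) (x, (a, y) :: l)) :
    0 < M.hprob σ n (y, l) ∧ 0 < σ.act (y, l) a ∧ 0 < M.δ y a x := by
  rw [hprob_succ] at hpos
  have h₁ := M.hprob_nonneg σ n (y, l)
  have h₂ := σ.act_nonneg (y, l) a
  have h₃ := M.δ_nonneg y a x
  refine ⟨h₁.lt_of_ne ?_, h₂.lt_of_ne ?_, h₃.lt_of_ne ?_⟩ <;> rintro h <;>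
    simp [← h] at hpos

lemma hprob_extendHist (n : ℕ) (h : Hist S A) (m : List (A × S)) :
    M.hprob σ (n + m.length) (extendHist h m) = M.hprob σ n h * pathProb M.δ σ.act h m := by
  induction m with
  | nil => simp [extendHist, pathProb]
  | cons p m ih =>
    rw [List.length_cons, ← add_assoc]
    change M.hprob σ _ (p.2, (p.1, (extendHist h m).1) :: (extendHist h m).2) = _
    rw [hprob_succ, ih, pathProb]
    ring

/-- The Markov property: a history of length `n + k` is a history of length `n` followed by
`k` further steps. -/
lemma sum_hprob_mul (n k : ℕ) (f : Hist S A → ℝ) :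
    ∑ h ∈ histsOfLength S A (n + k), M.hprob σ (n + k) h * f h
      = ∑ h ∈ histsOfLength S A n,
          M.hprob σ n h *
            ∑ m ∈ stepsOfLength S A k, pathProb M.δ σ.act h m * f (extendHist h m) := by
  rw [sum_histsOfLength_add]
  refine sum_congr rfl fun h _ => ?_
  rw [mul_sum]
  refine sum_congr rfl fun m hm => ?_
  rw [← mem_stepsOfLength.1 hm, hprob_extendHist, mul_assoc]

lemma sum_hprob (n : ℕ) : ∑ h ∈ histsOfLength S A n, M.hprob σ n h = 1 := by
  simpa [sum_histsOfLength_zero, hprob_zero, sum_pathProb, M.init_sum] using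
    M.sum_hprob_mul σ 0 n fun _ => 1

/-- The conditional probability, given the history `h`, of not having visited `T` after `k`
further steps. -/
def failAfter (h : Hist S A) (k : ℕ) : ℝ :=
  ∑ m ∈ stepsOfLength S A k,
    pathProb M.δ σ.act h m * if visitsT T (extendHist h m) then 0 else 1

def failProb (n : ℕ) : ℝ :=
  ∑ h ∈ histsOfLength S A n, M.hprob σ n h * if visitsT T h then 0 else 1

lemma failProb_add (n k : ℕ) :
    M.failProb σ T (n + k)
      = ∑ h ∈ histsOfLength S A n, M.hprob σ n h * M.failAfter σ T h k :=
  M.sum_hprob_mul σ n k _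

lemma failProb_eq_sum_init (k : ℕ) :
    M.failProb σ T k = ∑ s, M.init s * M.failAfter σ T (s, []) k := by
  simpa [sum_histsOfLength_zero, hprob_zero] using M.failProb_add σ T 0 k

lemma failAfter_nonneg (h : Hist S A) (k : ℕ) : 0 ≤ M.failAfter σ T h k :=
  sum_nonneg fun m _ => mul_nonneg (M.pathProb_nonneg σ h m) (by split_ifs <;> norm_num)

lemma failAfter_le (h : Hist S A) (k : ℕ) :
    M.failAfter σ T h k ≤ if visitsT T h then 0 else 1 := by
  split_ifs with hv
  · refine (sum_eq_zero fun m _ => ?_).le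
    rw [if_pos ((visitsT_extendHist h m).2 (Or.inl hv)), mul_zero]
  · rw [← M.sum_pathProb σ h k]
    refine sum_le_sum fun m _ => ?_
    split_ifs <;> simp [M.pathProb_nonneg σ h m]

lemma failAfter_le_one_sub (h : Hist S A) {k : ℕ} {m : List (A × S)}
    (hm : m ∈ stepsOfLength S A k) (hv : visitsT T (extendHist h m)) :
    M.failAfter σ T h k ≤ 1 - pathProb M.δ σ.act h m := by
  rw [← M.sum_pathProb σ h k, ← sum_erase_eq_sub hm, failAfter,
    ← sum_erase _ (a := m) (by simp [hv])]
  refine sum_le_sum fun m' _ => ?_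
  split_ifs <;> simp [M.pathProb_nonneg σ h m']

lemma failProb_nonneg (n : ℕ) : 0 ≤ M.failProb σ T n :=
  sum_nonneg fun h _ => mul_nonneg (M.hprob_nonneg σ n h) (by split_ifs <;> norm_num)

lemma failProb_antitone : Antitone (M.failProb σ T) := by
  refine antitone_nat_of_succ_le fun n => ?_
  rw [failProb_add, failProb]
  exact sum_le_sum fun h _ =>
    mul_le_mul_of_nonneg_left (M.failAfter_le σ T h 1) (M.hprob_nonneg σ n h)

lemma probReachBy_eq_one_sub_failProb (n : ℕ) :
    M.probReachBy T σ n = 1 - M.failProb σ T n := by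
  rw [probReachBy, tsum_eq_sum (s := histsOfLength S A n), ← M.sum_hprob σ n, failProb,
    ← sum_sub_distrib]
  · exact sum_congr rfl fun h _ => by split_ifs <;> ring
  · intro h hh
    rw [mem_histsOfLength] at hh
    simp [not_imp_comm.1 (M.length_eq_of_hprob_ne_zero σ) hh]

lemma almostSure_iff_tendsto_failProb :
    M.AlmostSure T σ ↔ Tendsto (M.failProb σ T) atTop (𝓝 0) := by
  have hreach : M.probReachBy T σ = fun n => 1 - M.failProb σ T n :=
    funext (M.probReachBy_eq_one_sub_failProb σ T)
  have hlim : Tendsto (M.probReachBy T σ) atTop (𝓝 (M.probReach T σ)) := by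
    refine tendsto_atTop_ciSup ?_ ⟨1, ?_⟩
    · rw [hreach]; exact fun m n hmn => sub_le_sub_left (M.failProb_antitone σ T hmn) 1
    · rintro _ ⟨n, rfl⟩; simp [hreach, M.failProb_nonneg σ T n]
  have hsub :
      Tendsto (M.failProb σ T) atTop (𝓝 0) ↔ Tendsto (M.probReachBy T σ) atTop (𝓝 1) := by
    rw [hreach]
    constructor <;> intro h
    · simpa using (tendsto_const_nhds (x := (1 : ℝ))).sub h
    · simpa using (tendsto_const_nhds (x := (1 : ℝ))).sub h
  rw [hsub, AlmostSure]
  exact ⟨fun h => h ▸ hlim, tendsto_nhds_unique hlim⟩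

lemma tendsto_failAfter_of_almostSure (hσ : M.AlmostSure T σ) {n : ℕ} {h : Hist S A}
    (hpos : 0 < M.hprob σ n h) : Tendsto (M.failAfter σ T h) atTop (𝓝 0) := by
  have hh : h ∈ histsOfLength S A n :=
    mem_histsOfLength.2 (M.length_eq_of_hprob_ne_zero σ hpos.ne')
  have hfail : Tendsto (fun k => M.failProb σ T (n + k) / M.hprob σ n h) atTop (𝓝 0) := by
    simpa using (((M.almostSure_iff_tendsto_failProb σ T).1 hσ).comp
      (tendsto_atTop_mono (fun k => Nat.le_add_left k n) tendsto_id)).div_const (M.hprob σ n h)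
  refine squeeze_zero (M.failAfter_nonneg σ T h) (fun k => ?_) hfail
  rw [le_div_iff₀' hpos, failProb_add]
  exact single_le_sum (f := fun h => M.hprob σ n h * M.failAfter σ T h k)
    (fun h _ => mul_nonneg (M.hprob_nonneg σ n h) (M.failAfter_nonneg σ T h k)) hh

lemma exists_visitsT_of_failAfter_lt_one {h : Hist S A} {k : ℕ} (hk : M.failAfter σ T h k < 1) :
    ∃ m ∈ stepsOfLength S A k, 0 < pathProb M.δ σ.act h m ∧ visitsT T (extendHist h m) := by
  by_contra! hnv
  refine hk.not_ge (le_of_eq ?_)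
  rw [← M.sum_pathProb σ h k]
  refine sum_congr rfl fun m hm => ?_
  rcases (M.pathProb_nonneg σ h m).lt_or_eq with hpos | hzero
  · simp [hnv m hm hpos]
  · simp [← hzero]

end Probability

section Conditioning

variable {M T} in
lemma Absorbing.eq_of_δ_pos (habs : M.Absorbing T) {t x : S} (ht : t ∈ T) {a : A}
    (hpos : 0 < M.δ t a x) : x = t := by
  by_contra hxt
  have hrest : ∑ s ∈ univ.erase t, M.δ t a s = 0 := by
    linarith [add_sum_erase univ (M.δ t a) (mem_univ t), M.δ_sum t a, habs t ht a]
  exact hpos.ne' ((sum_eq_zero_iff_of_nonneg fun s _ => M.δ_nonneg t a s).1 hrest x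
    (mem_erase.2 ⟨hxt, mem_univ x⟩))

variable {M T} in
lemma Absorbing.mem_of_visitsT (habs : M.Absorbing T) {n : ℕ} {h : Hist S A}
    (hpos : 0 < M.hprob σ n h) (hv : visitsT T h) : h.1 ∈ T := by
  obtain ⟨x, l⟩ := h
  induction n generalizing x l with
  | zero =>
    obtain rfl : l = [] := List.eq_nil_of_length_eq_zero (M.length_eq_of_hprob_ne_zero σ hpos.ne')
    exact hv.resolve_right (by simp)
  | succ n ih =>
    rcases l with _ | ⟨⟨a, y⟩, l⟩
    · exact absurd hpos (lt_irrefl 0)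
    · obtain ⟨h₁, -, h₃⟩ := M.pos_of_hprob_succ_pos σ hpos
      rcases (visitsT_extendHist (y, l) [(a, x)]).1 hv with hv | ⟨p, hp, hpT⟩
      · rw [habs.eq_of_δ_pos (ih y l h₁ hv) h₃]
        exact ih y l h₁ hv
      · rwa [List.mem_singleton.1 hp] at hpT

lemma suppInitF_reinit (V : Finset S) (hV : V.Nonempty) (hobs) :
    (M.reinit V hV hobs).suppInitF = V := by
  ext s
  simp only [suppInitF, mem_filter, mem_univ, true_and]
  change 0 < uniformS V s ↔ s ∈ V
  by_cases hs : s ∈ V <;> simp [uniformS, hs, hV.card_pos]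

lemma beliefOfFrom_reinit (V : Finset S) (hV : V.Nonempty) (hobs) (U : Finset S)
    (h : Hist S A) : (M.reinit V hV hobs).beliefOfFrom U h = M.beliefOfFrom U h := by
  obtain ⟨x, l⟩ := h
  induction l generalizing x with
  | nil => rfl
  | cons p l ih => exact congrArg (fun W => M.updateF W (M.obs x) p.1) (ih p.2)

lemma beliefOf_reinit (V : Finset S) (hV : V.Nonempty) (hobs) (h : Hist S A) :
    (M.reinit V hV hobs).beliefOf h = M.beliefOfFrom V h := by
  rw [beliefOf, suppInitF_reinit, beliefOfFrom_reinit]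

lemma beliefOfFrom_nil {V : Finset S} (hobs : ∀ s ∈ V, ∀ s' ∈ V, M.obs s = M.obs s') {s : S}
    (hs : s ∈ V) : M.beliefOfFrom V (s, []) = V :=
  filter_true_of_mem fun t ht => hobs t ht s hs

lemma exists_hist_of_mem_beliefOf {n : ℕ} {h : Hist S A} (hpos : 0 < M.hprob σ n h) {s : S}
    (hs : s ∈ M.beliefOf h) :
    ∃ l, obsHist M.obs (s, l) = obsHist M.obs h ∧ 0 < M.hprob σ n (s, l) := by
  obtain ⟨x, l⟩ := h
  induction n generalizing x l s with
  | zero =>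
    obtain rfl : l = [] := List.eq_nil_of_length_eq_zero (M.length_eq_of_hprob_ne_zero σ hpos.ne')
    simp only [beliefOf, beliefOfFrom, beliefOfFromAux, suppInitF, mem_filter, mem_univ,
      true_and] at hs
    exact ⟨[], by simp [obsHist, hs.2], hs.1⟩
  | succ n ih =>
    rcases l with _ | ⟨⟨a, y⟩, l⟩
    · exact absurd hpos (lt_irrefl 0)
    obtain ⟨h₁, h₂, -⟩ := M.pos_of_hprob_succ_pos σ hpos
    simp only [beliefOf, beliefOfFrom, beliefOfFromAux, updateF, mem_filter, mem_univ,
      true_and] at hs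
    obtain ⟨hsx, u, hu, hδ⟩ := hs
    obtain ⟨l', hobs, hpos'⟩ := ih y l h₁ hu
    have hact : σ.act (u, l') = σ.act (y, l) := σ.obsBased _ _ hobs
    simp only [obsHist, Prod.mk.injEq] at hobs
    refine ⟨(a, u) :: l', by simp [obsHist, hsx, hobs.1, hobs.2], ?_⟩
    rw [hprob_succ, hact]
    exact mul_pos (mul_pos hpos' h₂) hδ

lemma failAfter_after {x : S} {tail tail' : List (A × S)}
    (htail : tail.map (fun p => (p.1, M.obs p.2)) = tail'.map (fun p => (p.1, M.obs p.2)))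
    (hnv : ¬ visitsT T (x, tail')) (k : ℕ) :
    M.failAfter (σ.after tail) T (x, []) k = M.failAfter σ T (x, tail') k := by
  have hact : (σ.after tail).act = (σ.after tail').act := funext fun g => σ.obsBased _ _ <| by
    simp [obsHist, htail]
  have hnv' : ¬ visitsT T ((x, []) : Hist S A) := fun hv => hnv (hv.imp id (by simp))
  refine sum_congr rfl fun m _ => ?_
  rw [hact, pathProb_after]
  simp [visitsT_extendHist, hnv, hnv']

/-- The witness is `σ` continued after `h` and `a`: from a state `t` of the new belief-support it
fails exactly as `σ` does after a positive-probability history that looks like `h`, `a` and ends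
in `t`, that is, with vanishing probability. -/
lemma updateF_mem_beliefWin (habs : M.Absorbing T) (hσ : M.AlmostSure T σ) {n : ℕ}
    {h : Hist S A} (hpos : 0 < M.hprob σ n h) {a : A} (ha : 0 < σ.act h a) {z : Z}
    (hne : (M.updateF (M.beliefOf h) z a).Nonempty) :
    M.updateF (M.beliefOf h) z a ∈ M.BeliefWin T := by
  set V := M.updateF (M.beliefOf h) z a
  have hz : ∀ t ∈ V, M.obs t = z := fun t ht => (mem_filter.1 ht).2.1
  refine ⟨hne, fun s hs s' hs' => (hz s hs).trans (hz s' hs').symm,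
    σ.after ((a, h.1) :: h.2), ?_⟩
  refine (almostSure_iff_tendsto_failProb _ _ _).2 (Tendsto.congr (fun k =>
    ((M.reinit V hne _).failProb_eq_sum_init (σ.after ((a, h.1) :: h.2)) T k).symm) ?_)
  suffices hV :
      ∀ t ∈ V, Tendsto (M.failAfter (σ.after ((a, h.1) :: h.2)) T (t, [])) atTop (𝓝 0) by
    change Tendsto (fun k => ∑ t, uniformS V t * M.failAfter _ T (t, []) k) atTop (𝓝 0)
    simpa [uniformS, ite_mul, sum_ite_mem] using
      tendsto_finsetSum V fun t ht => (hV t ht).const_mul (V.card : ℝ)⁻¹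
  intro t ht
  by_cases htT : t ∈ T
  · refine tendsto_const_nhds.congr fun k => le_antisymm (M.failAfter_nonneg _ T _ k) ?_
    simpa [htT, visitsT] using M.failAfter_le (σ.after ((a, h.1) :: h.2)) T (t, []) k
  obtain ⟨-, -, u, hu, hδ⟩ := mem_filter.1 ht
  obtain ⟨l, hobs, hposl⟩ := M.exists_hist_of_mem_beliefOf σ hpos hu
  have hact : σ.act (u, l) = σ.act h := σ.obsBased _ _ hobs
  simp only [obsHist, Prod.mk.injEq] at hobs
  have hpos' : 0 < M.hprob σ (n + 1) (t, (a, u) :: l) := by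
    rw [hprob_succ, hact]
    exact mul_pos (mul_pos hposl ha) hδ
  have hnv : ¬ visitsT T (t, (a, u) :: l) := fun hv => htT (habs.mem_of_visitsT σ hpos' hv)
  refine (M.tendsto_failAfter_of_almostSure σ T hσ hpos').congr fun k => ?_
  exact (M.failAfter_after σ T (by simp [hobs.1, hobs.2]) hnv k).symm

lemma mem_allowFin_of_almostSure (habs : M.Absorbing T) (hσ : M.AlmostSure T σ) {n : ℕ}
    {h : Hist S A} (hpos : 0 < M.hprob σ n h) {a : A} (ha : 0 < σ.act h a) :
    a ∈ M.allowFin T (M.beliefOf h) :=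
  mem_filter.2 ⟨mem_univ a, fun _ hne => M.updateF_mem_beliefWin σ T habs hσ hpos ha hne⟩

lemma allowFin_nonempty [Nonempty A] (habs : M.Absorbing T) {V : Finset S}
    (hV : V ∈ M.BeliefWin T) : (M.allowFin T V).Nonempty := by
  obtain ⟨⟨s, hs⟩, hobs, σ, hσ⟩ := hV
  obtain ⟨a, ha⟩ := σ.exists_inv_card_le (s, [])
  have hpos : 0 < (M.reinit V ⟨s, hs⟩ hobs).hprob σ 0 (s, []) := by
    simpa [hprob_zero, reinit, uniformS, hs] using ⟨s, hs⟩
  refine ⟨a, ?_⟩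
  have := (M.reinit V ⟨s, hs⟩ hobs).mem_allowFin_of_almostSure σ T habs hσ hpos
    (lt_of_lt_of_le (by simp [Fintype.card_pos]) ha)
  rwa [beliefOf_reinit M V ⟨s, hs⟩ hobs (s, []), M.beliefOfFrom_nil hobs hs] at this

end Conditioning

section Attractor

def attractor : ℕ → Finset (S × Finset S)
  | 0 => univ.filter fun p => p.1 ∈ T
  | k + 1 => attractor k ∪ univ.filter fun p =>
      ∃ a ∈ M.allowFin T p.2, ∃ t, 0 < M.δ p.1 a t ∧
        (t, M.updateF p.2 (M.obs t) a) ∈ attractor k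

lemma attractor_mono : Monotone (M.attractor T) :=
  monotone_nat_of_le_succ fun _ => subset_union_left

lemma exists_attractor_subset : ∃ N, ∀ k, M.attractor T k ⊆ M.attractor T N := by
  obtain ⟨N, hN⟩ := WellFoundedGT.monotone_chain_condition ⟨_, M.attractor_mono T⟩
  exact ⟨N, fun k => (le_total k N).elim (M.attractor_mono T ·) fun h => (hN k h).ge⟩

lemma attractor_reinit (V : Finset S) (hV : V.Nonempty) (hobs) (k : ℕ) :
    (M.reinit V hV hobs).attractor T k = M.attractor T k := by
  induction k with
  | zero => rfl
  | succ k ih => simp only [attractor, ih]; rfl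

lemma mem_attractor_of_hprob_pos (habs : M.Absorbing T) (hσ : M.AlmostSure T σ) (h : Hist S A)
    {n k : ℕ} (m : List (A × S)) (hpos : 0 < M.hprob σ (n + m.length) (extendHist h m))
    (hk : ((extendHist h m).1, M.beliefOf (extendHist h m)) ∈ M.attractor T k) :
    (h.1, M.beliefOf h) ∈ M.attractor T (k + m.length) := by
  induction m generalizing k with
  | nil => exact hk
  | cons p m ih =>
    obtain ⟨a, t⟩ := p
    obtain ⟨h₁, h₂, h₃⟩ := M.pos_of_hprob_succ_pos σ hpos
    have hstep : ((extendHist h m).1, M.beliefOf (extendHist h m)) ∈ M.attractor T (k + 1) :=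
      mem_union_right _ <| mem_filter.2
        ⟨mem_univ _, a, M.mem_allowFin_of_almostSure σ T habs hσ h₁ h₂, t, h₃, hk⟩
    simpa [add_assoc, add_comm 1] using ih h₁ hstep

lemma mem_attractor_of_mem_beliefWin (habs : M.Absorbing T) {V : Finset S}
    (hV : V ∈ M.BeliefWin T) {s : S} (hs : s ∈ V) : ∃ k, (s, V) ∈ M.attractor T k := by
  obtain ⟨hVne, hobs, σ, hσ⟩ := hV
  set M' := M.reinit V hVne hobs
  have hpos : 0 < M'.hprob σ 0 (s, []) := by
    simpa [hprob_zero, M', reinit, uniformS, hs] using hVne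
  obtain ⟨k, hk⟩ := ((M'.tendsto_failAfter_of_almostSure σ T hσ hpos).eventually
    (gt_mem_nhds one_pos)).exists
  obtain ⟨m, hm, hpath, hv⟩ := M'.exists_visitsT_of_failAfter_lt_one σ T hk
  have hpos' : 0 < M'.hprob σ (0 + m.length) (extendHist (s, []) m) :=
    (mul_pos hpos hpath).trans_eq (M'.hprob_extendHist σ 0 (s, []) m).symm
  have hT : ((extendHist (s, []) m).1, M'.beliefOf (extendHist (s, []) m)) ∈ M'.attractor T 0 :=
    mem_filter.2 ⟨mem_univ _, Absorbing.mem_of_visitsT (M := M') σ habs hpos' hv⟩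
  refine ⟨0 + m.length, ?_⟩
  have := M'.mem_attractor_of_hprob_pos σ T habs hσ (s, []) m hpos' hT
  rwa [beliefOf_reinit, M.beliefOfFrom_nil hobs hs, attractor_reinit] at this

end Attractor

section StratAllow

/-- The smallest positive transition probability, capped at `1`. -/
def minPosProb : ℝ :=
  (insert 1 ((univ.filter fun p : S × A × S => 0 < M.δ p.1 p.2.1 p.2.2).image
    fun p => M.δ p.1 p.2.1 p.2.2)).min' (insert_nonempty _ _)

lemma minPosProb_pos : 0 < M.minPosProb := by
  refine (lt_min'_iff _ _).2 fun x hx => ?_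
  rw [mem_insert, mem_image] at hx
  obtain rfl | ⟨p, hp, rfl⟩ := hx
  · exact one_pos
  · exact (mem_filter.1 hp).2

lemma minPosProb_le_one : M.minPosProb ≤ 1 :=
  min'_le _ _ (mem_insert_self _ _)

lemma minPosProb_le {s t : S} {a : A} (hpos : 0 < M.δ s a t) : M.minPosProb ≤ M.δ s a t :=
  min'_le _ _ (mem_insert_of_mem (mem_image_of_mem _ (mem_filter.2 ⟨mem_univ (s, a, t), hpos⟩)))

variable [Nonempty A] (U : Finset S)

lemma inv_card_le_actAllowFrom {h : Hist S A} {a : A}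
    (ha : a ∈ M.allowFin T (M.beliefOfFrom U h)) :
    (Fintype.card A : ℝ)⁻¹ ≤ M.actAllowFrom T U h a := by
  rw [actAllowFrom, if_pos ⟨a, ha⟩, uniformA, if_pos ha]
  exact inv_anti₀ (by exact_mod_cast card_pos.2 ⟨a, ha⟩) (by exact_mod_cast card_le_univ _)

lemma mem_allowFin_of_actAllowFrom_pos {h : Hist S A} {a : A}
    (hne : (M.allowFin T (M.beliefOfFrom U h)).Nonempty) (ha : 0 < M.actAllowFrom T U h a) :
    a ∈ M.allowFin T (M.beliefOfFrom U h) := by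
  by_contra hna
  simp [actAllowFrom, if_pos hne, uniformA, hna] at ha

lemma stratAllowFrom_invariant (habs : M.Absorbing T) (hU : U ∈ M.BeliefWin T)
    (hUne : U.Nonempty) (hobs : ∀ s ∈ U, ∀ s' ∈ U, M.obs s = M.obs s') {n : ℕ}
    {h : Hist S A} (hpos : 0 < (M.reinit U hUne hobs).hprob (M.stratAllowFrom T U) n h) :
    h.1 ∈ M.beliefOfFrom U h ∧ M.beliefOfFrom U h ∈ M.BeliefWin T := by
  obtain ⟨x, l⟩ := h
  induction n generalizing x l with
  | zero =>
    obtain rfl : l = [] := List.eq_nil_of_length_eq_zero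
      ((M.reinit U hUne hobs).length_eq_of_hprob_ne_zero _ hpos.ne')
    have hx : x ∈ U := uniformS_mem hpos
    rw [M.beliefOfFrom_nil hobs hx]
    exact ⟨hx, hU⟩
  | succ n ih =>
    rcases l with _ | ⟨⟨a, y⟩, l⟩
    · exact absurd hpos (lt_irrefl 0)
    obtain ⟨h₁, h₂, h₃⟩ := (M.reinit U hUne hobs).pos_of_hprob_succ_pos _ hpos
    obtain ⟨hy, hwin⟩ := ih y l h₁
    have ha := M.mem_allowFin_of_actAllowFrom_pos T U (M.allowFin_nonempty T habs hwin) h₂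
    have hx : x ∈ M.updateF (M.beliefOfFrom U (y, l)) (M.obs x) a :=
      mem_filter.2 ⟨mem_univ x, rfl, y, hy, h₃⟩
    exact ⟨hx, (mem_filter.1 ha).2 _ ⟨x, hx⟩⟩

def stepBound : ℝ := M.minPosProb * (Fintype.card A : ℝ)⁻¹

lemma stepBound_pos : 0 < M.stepBound :=
  mul_pos M.minPosProb_pos (inv_pos.2 (by exact_mod_cast Fintype.card_pos))

lemma stepBound_le_inv_card : M.stepBound ≤ (Fintype.card A : ℝ)⁻¹ :=
  mul_le_of_le_one_left (inv_nonneg.2 (Nat.cast_nonneg _)) M.minPosProb_le_one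

lemma stepBound_le_one : M.stepBound ≤ 1 :=
  M.stepBound_le_inv_card.trans (inv_le_one_of_one_le₀ (by exact_mod_cast Fintype.card_pos))

lemma exists_path_of_mem_attractor (habs : M.Absorbing T) {k : ℕ} {h : Hist S A}
    (hk : (h.1, M.beliefOfFrom U h) ∈ M.attractor T k) :
    ∃ m ∈ stepsOfLength S A k, (extendHist h m).1 ∈ T ∧
      M.stepBound ^ k ≤ pathProb M.δ (M.actAllowFrom T U) h m := by
  induction k generalizing h with
  | zero => exact ⟨[], by simp [stepsOfLength], (mem_filter.1 hk).2, by simp [pathProb]⟩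
  | succ k ih =>
    rcases mem_union.1 hk with hk | hk
    · -- stay in the absorbing target for one more step
      obtain ⟨m, hm, hT, hprob⟩ := ih hk
      obtain ⟨a, ha⟩ := (M.stratAllowFrom T U).exists_inv_card_le (extendHist h m)
      refine ⟨(a, (extendHist h m).1) :: m, by simpa [mem_stepsOfLength] using hm, hT, ?_⟩
      rw [pathProb, habs _ hT, mul_one, pow_succ]
      exact mul_le_mul hprob (M.stepBound_le_inv_card.trans ha) M.stepBound_pos.le
        (pathProb_nonneg M (M.stratAllowFrom T U) h m)
    · obtain ⟨-, a, ha, t, hδ, hk⟩ := mem_filter.1 hk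
      obtain ⟨m, hm, hT, hprob⟩ := ih (h := extendHist h [(a, t)]) hk
      refine ⟨m ++ [(a, t)], by simpa [mem_stepsOfLength] using hm,
        by rwa [extendHist_append], ?_⟩
      rw [pathProb_append, pow_succ']
      refine mul_le_mul ?_ hprob (pow_nonneg M.stepBound_pos.le _)
        (M.pathProb_nonneg (M.stratAllowFrom T U) h _)
      simp only [pathProb, one_mul, stepBound, mul_comm M.minPosProb]
      exact mul_le_mul (M.inv_card_le_actAllowFrom T U ha) (M.minPosProb_le hδ)
        M.minPosProb_pos.le ((M.stratAllowFrom T U).act_nonneg _ _)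

lemma failAfter_stratAllowFrom_le (habs : M.Absorbing T) (hU : U ∈ M.BeliefWin T)
    (hUne : U.Nonempty) (hobs : ∀ s ∈ U, ∀ s' ∈ U, M.obs s = M.obs s') {N : ℕ}
    (hN : ∀ k, M.attractor T k ⊆ M.attractor T N) {n : ℕ} {h : Hist S A}
    (hpos : 0 < (M.reinit U hUne hobs).hprob (M.stratAllowFrom T U) n h) :
    (M.reinit U hUne hobs).failAfter (M.stratAllowFrom T U) T h N ≤ 1 - M.stepBound ^ N := by
  obtain ⟨hmem, hwin⟩ := M.stratAllowFrom_invariant T U habs hU hUne hobs hpos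
  obtain ⟨k, hk⟩ := M.mem_attractor_of_mem_beliefWin T habs hwin hmem
  obtain ⟨m, hm, hT, hprob⟩ := M.exists_path_of_mem_attractor T U habs (hN k hk)
  exact ((M.reinit U hUne hobs).failAfter_le_one_sub _ T h hm (Or.inl hT)).trans
    (sub_le_sub_left hprob 1)

lemma failProb_stratAllowFrom_add_le (habs : M.Absorbing T) (hU : U ∈ M.BeliefWin T)
    (hUne : U.Nonempty) (hobs : ∀ s ∈ U, ∀ s' ∈ U, M.obs s = M.obs s') {N : ℕ}
    (hN : ∀ k, M.attractor T k ⊆ M.attractor T N) (n : ℕ) :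
    (M.reinit U hUne hobs).failProb (M.stratAllowFrom T U) T (n + N)
      ≤ (1 - M.stepBound ^ N) * (M.reinit U hUne hobs).failProb (M.stratAllowFrom T U) T n := by
  set M' := M.reinit U hUne hobs
  calc M'.failProb (M.stratAllowFrom T U) T (n + N)
      = ∑ h ∈ histsOfLength S A n,
          M'.hprob (M.stratAllowFrom T U) n h * M'.failAfter (M.stratAllowFrom T U) T h N :=
        M'.failProb_add _ T n N
    _ ≤ ∑ h ∈ histsOfLength S A n, (1 - M.stepBound ^ N) *
          (M'.hprob (M.stratAllowFrom T U) n h * if visitsT T h then 0 else 1) :=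
        sum_le_sum fun h _ => ?_
    _ = _ := (mul_sum _ _ _).symm
  split_ifs with hv
  · have := M'.failAfter_le (M.stratAllowFrom T U) T h N
    simp only [if_pos hv] at this
    simp only [mul_zero]
    exact mul_nonpos_of_nonneg_of_nonpos (M'.hprob_nonneg _ n h) this
  · simp only [mul_one]
    rw [mul_comm]
    rcases (M'.hprob_nonneg (M.stratAllowFrom T U) n h).lt_or_eq with hpos | hzero
    · exact mul_le_mul_of_nonneg_right
        (M.failAfter_stratAllowFrom_le T U habs hU hUne hobs hN hpos) hpos.le
    · simp [← hzero]

end StratAllow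

end POMDP

/-- The belief-support based strategy `σ_Allow` is almost-sure
winning for `Reach(T)` from every belief-support `U ∈ BeliefWin(G,T)`,
i.e. in the POMDP reinitialized to the uniform distribution on `U`. -/
theorem stratAllow_almostSure
    {S A Z : Type} [Fintype S] [Fintype A] [Fintype Z] [Nonempty A]
    (M : POMDP S A Z) (T : Set S)
    (habs : M.Absorbing T)
    (U : Finset S) (hmem : U ∈ M.BeliefWin T)
    (hU : U.Nonempty) (hobs : ∀ s ∈ U, ∀ s' ∈ U, M.obs s = M.obs s') :
    (M.reinit U hU hobs).AlmostSure T (M.stratAllowFrom T U) := by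
  obtain ⟨N, hN⟩ := M.exists_attractor_subset T
  have hq0 : 0 ≤ 1 - M.stepBound ^ N :=
    sub_nonneg.2 (pow_le_one₀ M.stepBound_pos.le M.stepBound_le_one)
  have hq1 : 1 - M.stepBound ^ N < 1 := sub_lt_self _ (pow_pos M.stepBound_pos N)
  exact (POMDP.almostSure_iff_tendsto_failProb _ _ _).2 <|
    tendsto_zero_of_antitone_of_le_mul (POMDP.failProb_antitone _ _ _)
      (POMDP.failProb_nonneg _ _ _) hq0 hq1
      (M.failProb_stratAllowFrom_add_le T U habs hmem hU hobs hN)
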